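/- arXiv:2408.03476 — 6 statements merged into one kernel-verified Lean document; each statement's English description precedes it below -/
import Mathlib

section
/- Let Q₁ and Q₂ be probability measures on (Ω, F), both equivalent to P, and suppose K and L are sets of nonnegative random variables with sup_{ξ∈K} E_{Q₁}[ξ] < ∞ and sup_{ξ∈L} E_{Q₂}[ξ] < ∞. Define the probability measure Q by dQ/dP = (1/C)·min(dQ₁/dP, dQ₂/dP), where C = E_P[min(dQ₁/dP, dQ₂/dP)]. Then 0 < C < ∞, Q is a probability measure equivalent to P, and sup_{ξ∈K∪L} E_Q[ξ] < ∞. -/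
open MeasureTheory
open scoped ENNReal

/-!
The measure `P.withDensity (min (dQ₁/dP) (dQ₂/dP))` lies below both `Q₁` and `Q₂`, since
`P.withDensity (dQᵢ/dP) ≤ Qᵢ`; hence so does its normalisation up to the factor `C⁻¹`, which
bounds `Q`-expectations by `C⁻¹` times `Q₁`- or `Q₂`-expectations. The minimum of the two
densities is `P`-a.e. positive because `P ≪ Qᵢ`, which gives `P ≪ Q` and `C > 0`.
-/

namespace MeasureTheory.Measure

variable {α : Type*} [MeasurableSpace α]

theorem withDensity_min_rnDeriv_le_left (μ ν₁ ν₂ : Measure α) :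
    μ.withDensity (fun x ↦ min (ν₁.rnDeriv μ x) (ν₂.rnDeriv μ x)) ≤ ν₁ :=
  (withDensity_mono (ae_of_all _ fun _ ↦ min_le_left _ _)).trans (withDensity_rnDeriv_le ν₁ μ)

theorem withDensity_min_rnDeriv_le_right (μ ν₁ ν₂ : Measure α) :
    μ.withDensity (fun x ↦ min (ν₁.rnDeriv μ x) (ν₂.rnDeriv μ x)) ≤ ν₂ := by
  simpa only [min_comm] using withDensity_min_rnDeriv_le_left μ ν₂ ν₁

theorem absolutelyContinuous_withDensity_min_rnDeriv {μ ν₁ ν₂ : Measure α} [SigmaFinite μ]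
    [ν₁.HaveLebesgueDecomposition μ] [ν₂.HaveLebesgueDecomposition μ]
    (h₁ : μ ≪ ν₁) (h₂ : μ ≪ ν₂) :
    μ ≪ μ.withDensity (fun x ↦ min (ν₁.rnDeriv μ x) (ν₂.rnDeriv μ x)) := by
  refine withDensity_absolutelyContinuous'
    ((ν₁.measurable_rnDeriv μ).min (ν₂.measurable_rnDeriv μ)).aemeasurable ?_
  filter_upwards [rnDeriv_pos' h₁, rnDeriv_pos' h₂] with x hx₁ hx₂
  exact (lt_min hx₁ hx₂).ne'

theorem lintegral_smul_le_of_le {ρ ν : Measure α} (hρν : ρ ≤ ν) (c : ℝ≥0∞) (f : α → ℝ≥0∞) :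
    ∫⁻ x, f x ∂(c • ρ) ≤ c * ∫⁻ x, f x ∂ν := by
  rw [lintegral_smul_measure]
  exact mul_le_mul_right (lintegral_mono' hρν le_rfl) c

end MeasureTheory.Measure

open MeasureTheory.Measure in
theorem stmt_4_general {Ω : Type*} [MeasurableSpace Ω] (P Q₁ Q₂ : Measure Ω)
    [IsProbabilityMeasure P] [IsProbabilityMeasure Q₁] [IsProbabilityMeasure Q₂]
    (h1' : P ≪ Q₁) (h2' : P ≪ Q₂)
    (K L : Set (Ω → ℝ))
    (BK : ℝ≥0∞) (hBK : BK < ⊤) (hK : ∀ f ∈ K, ∫⁻ ω, ENNReal.ofReal (f ω) ∂Q₁ ≤ BK)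
    (BL : ℝ≥0∞) (hBL : BL < ⊤) (hL : ∀ f ∈ L, ∫⁻ ω, ENNReal.ofReal (f ω) ∂Q₂ ≤ BL)
    (C : ℝ≥0∞) (hC : C = ∫⁻ ω, min (Q₁.rnDeriv P ω) (Q₂.rnDeriv P ω) ∂P)
    (Q : Measure Ω)
    (hQ : Q = C⁻¹ • P.withDensity (fun ω => min (Q₁.rnDeriv P ω) (Q₂.rnDeriv P ω))) :
    0 < C ∧ C < ⊤ ∧ IsProbabilityMeasure Q ∧ Q ≪ P ∧ P ≪ Q ∧
      ∃ B : ℝ≥0∞, B < ⊤ ∧ ∀ f ∈ K ∪ L, ∫⁻ ω, ENNReal.ofReal (f ω) ∂Q ≤ B := by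
  set ρ := P.withDensity (fun ω => min (Q₁.rnDeriv P ω) (Q₂.rnDeriv P ω))
  have hCρ : C = ρ Set.univ := by
    rw [hC, withDensity_apply _ MeasurableSet.univ, restrict_univ]
  have hPρ : P ≪ ρ := absolutelyContinuous_withDensity_min_rnDeriv h1' h2'
  have hC_top : C < ⊤ :=
    hCρ ▸ (withDensity_min_rnDeriv_le_left P Q₁ Q₂ _).trans_lt (measure_lt_top Q₁ _)
  have hC_ne_zero : C ≠ 0 := fun h ↦ one_ne_zero (measure_univ (μ := P) ▸ hPρ (hCρ ▸ h))
  have : IsFiniteMeasure ρ := ⟨hCρ ▸ hC_top⟩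
  have : NeZero ρ := ⟨fun h ↦ hC_ne_zero (by rw [hCρ, h, coe_zero, Pi.zero_apply])⟩
  have hQP : Q ≪ P := hQ ▸ smul_absolutelyContinuous.trans (withDensity_absolutelyContinuous _ _)
  have hPQ : P ≪ Q :=
    hQ ▸ hPρ.trans (absolutelyContinuous_smul (ENNReal.inv_ne_zero.2 hC_top.ne))
  have hB_top : C⁻¹ * max BK BL < ⊤ :=
    ENNReal.mul_lt_top (ENNReal.inv_lt_top.2 (pos_iff_ne_zero.2 hC_ne_zero)) (max_lt hBK hBL)
  refine ⟨pos_iff_ne_zero.2 hC_ne_zero, hC_top, hQ ▸ hCρ ▸ inferInstance, hQP, hPQ,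
    C⁻¹ * max BK BL, hB_top, ?_⟩
  rintro f (hf | hf) <;> rw [hQ]
  · exact (lintegral_smul_le_of_le (withDensity_min_rnDeriv_le_left P Q₁ Q₂) _ _).trans
      (mul_le_mul_right ((hK f hf).trans (le_max_left _ _)) _)
  · exact (lintegral_smul_le_of_le (withDensity_min_rnDeriv_le_right P Q₁ Q₂) _ _).trans
      (mul_le_mul_right ((hL f hf).trans (le_max_right _ _)) _)

theorem stmt_4 {Ω : Type*} [MeasurableSpace Ω] (P Q₁ Q₂ : Measure Ω)
    [IsProbabilityMeasure P] [IsProbabilityMeasure Q₁] [IsProbabilityMeasure Q₂]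
    (h1 : Q₁ ≪ P) (h1' : P ≪ Q₁) (h2 : Q₂ ≪ P) (h2' : P ≪ Q₂)
    (K L : Set (Ω → ℝ))
    (hKnn : ∀ f ∈ K, ∀ᵐ ω ∂P, 0 ≤ f ω) (hLnn : ∀ f ∈ L, ∀ᵐ ω ∂P, 0 ≤ f ω)
    (BK : ℝ≥0∞) (hBK : BK < ⊤) (hK : ∀ f ∈ K, ∫⁻ ω, ENNReal.ofReal (f ω) ∂Q₁ ≤ BK)
    (BL : ℝ≥0∞) (hBL : BL < ⊤) (hL : ∀ f ∈ L, ∫⁻ ω, ENNReal.ofReal (f ω) ∂Q₂ ≤ BL)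
    (C : ℝ≥0∞) (hC : C = ∫⁻ ω, min (Q₁.rnDeriv P ω) (Q₂.rnDeriv P ω) ∂P)
    (Q : Measure Ω)
    (hQ : Q = C⁻¹ • P.withDensity (fun ω => min (Q₁.rnDeriv P ω) (Q₂.rnDeriv P ω))) :
    0 < C ∧ C < ⊤ ∧ IsProbabilityMeasure Q ∧ Q ≪ P ∧ P ≪ Q ∧
      ∃ B : ℝ≥0∞, B < ⊤ ∧ ∀ f ∈ K ∪ L, ∫⁻ ω, ENNReal.ofReal (f ω) ∂Q ≤ B :=
  stmt_4_general P Q₁ Q₂ h1' h2' K L BK hBK hK BL hBL hL C hC Q hQ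
end

section
/- Let (E, Σ, μ) be a finite measure space and {ξₙ} ⊆ L¹(μ) with supₙ ∫|ξₙ| dμ < ∞. Then there exist a subsequence {n_k} and an increasing sequence {A_k} ⊆ Σ such that {1_{A_m} ξ_{n_k}}_k is uniformly μ-integrable for every m, and ⋃_k A_k = E \ N for some N ∈ Σ with μ(N) = 0. -/
/-!
Let `δ = inf_c limsup_n ∫_{|ξₙ| ≥ c} |ξₙ| dμ` be the mass of `|ξₙ|` that asymptotically escapes
to infinity. Choose a subsequence whose tail at the moving level `2^k`,
`∫_{|ξ_{n_k}| ≥ 2^k} |ξ_{n_k}|`, already carries almost all of `δ`. Then the truncations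
`ξ_{n_k} 1_{|ξ_{n_k}| < 2^k}` are uniformly integrable: mass `ε` of a truncation on a small set,
together with the tail at level `2^k`, would put mass `δ + ε` above a fixed level `c`, which is
impossible once `c` is chosen with `limsup_n ∫_{|ξₙ| ≥ c} |ξₙ| < δ + ε`. By Markov the discarded
sets `D_k = {|ξ_{n_k}| ≥ 2^k}` have measure at most `B 2^{-k}`, so by Borel–Cantelli the sets
`A_m = ⋂_{k ≥ m} D_kᶜ` exhaust `E` up to a null set, and on `A_m` the subsequence eventually
coincides with its truncation.
-/

open MeasureTheory Filter Set Topology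
open scoped ENNReal NNReal

namespace ENNReal

theorem eventually_le_add_of_le_liminf {ι : Type*} {l : Filter ι} {u : ι → ℝ≥0∞} {a ε : ℝ≥0∞}
    (ha : a ≠ ⊤) (hε : ε ≠ 0) (h : a ≤ liminf u l) : ∀ᶠ i in l, a ≤ u i + ε := by
  rcases eq_or_ne a 0 with rfl | ha₀
  · exact .of_forall fun _ => zero_le
  refine (eventually_lt_of_lt_liminf ((ENNReal.sub_lt_self ha ha₀ hε).trans_le h)).mono
    fun i hi => tsub_le_iff_right.1 hi.le

theorem frequently_le_add_of_le_limsup {ι : Type*} {l : Filter ι} [l.NeBot] {u : ι → ℝ≥0∞}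
    {a ε : ℝ≥0∞} (ha : a ≠ ⊤) (hε : ε ≠ 0) (h : a ≤ limsup u l) : ∃ᶠ i in l, a ≤ u i + ε := by
  rcases eq_or_ne a 0 with rfl | ha₀
  · exact .of_forall fun _ => zero_le
  refine (frequently_lt_of_lt_limsup (by isBoundedDefault)
    ((ENNReal.sub_lt_self ha ha₀ hε).trans_le h)).mono fun i hi => tsub_le_iff_right.1 hi.le

end ENNReal

theorem unifIntegrable_of_eventually_cofinite {ι E β : Type*} [MeasurableSpace E]
    [NormedAddCommGroup β] {μ : Measure E} {p : ℝ≥0∞} {f : ι → E → β} (hp_one : 1 ≤ p)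
    (hp_top : p ≠ ⊤) (hf : ∀ i, MemLp (f i) p μ)
    (h : ∀ ε : ℝ, 0 < ε → ∃ δ : ℝ, 0 < δ ∧ ∀ᶠ i in cofinite, ∀ s, MeasurableSet s →
      μ s ≤ ENNReal.ofReal δ → eLpNorm (s.indicator (f i)) p μ ≤ ENNReal.ofReal ε) :
    UnifIntegrable f p μ := by
  intro ε hε
  obtain ⟨δ₁, hδ₁, hev⟩ := h ε hε
  obtain ⟨S, hS, hgood⟩ := hasBasis_cofinite.eventually_iff.1 hev
  have := hS.to_subtype
  obtain ⟨δ₂, hδ₂, hexc⟩ := unifIntegrable_finite hp_one hp_top (fun i : S => hf i) hε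
  refine ⟨min δ₁ δ₂, lt_min hδ₁ hδ₂, fun i s hs hμs => ?_⟩
  by_cases hi : i ∈ S
  · exact hexc ⟨i, hi⟩ s hs (hμs.trans (ENNReal.ofReal_le_ofReal (min_le_right _ _)))
  · exact hgood hi s hs (hμs.trans (ENNReal.ofReal_le_ofReal (min_le_left _ _)))

section Tails

variable {E : Type*} [MeasurableSpace E] {μ : Measure E}

noncomputable def tailLIntegral (μ : Measure E) (g : E → ℝ≥0∞) (c : ℝ≥0∞) : ℝ≥0∞ :=
  ∫⁻ x in {x | c ≤ g x}, g x ∂μ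

noncomputable def tailDefect (μ : Measure E) (f : ℕ → E → ℝ≥0∞) : ℝ≥0∞ :=
  ⨅ c : ℝ≥0, limsup (fun n => tailLIntegral μ (f n) c) atTop

theorem lintegral_le_tailLIntegral_add_mul {g : E → ℝ≥0∞} (hg : Measurable g) (c : ℝ≥0∞)
    (u : Set E) : ∫⁻ x in u, g x ∂μ ≤ tailLIntegral μ g c + c * μ u := by
  have hmeas : MeasurableSet {x | c ≤ g x} := measurableSet_le measurable_const hg
  calc ∫⁻ x in u, g x ∂μ ≤ ∫⁻ x in u, ({x | c ≤ g x}.indicator g x + c) ∂μ := by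
        refine lintegral_mono fun x => ?_
        by_cases hx : c ≤ g x
        · simp [hx]
        · simpa [hx] using (not_le.1 hx).le
    _ = ∫⁻ x in u, {x | c ≤ g x}.indicator g x ∂μ + c * μ u := by
        rw [lintegral_add_right _ measurable_const, setLIntegral_const]
    _ ≤ ∫⁻ x, {x | c ≤ g x}.indicator g x ∂μ + c * μ u :=
        add_le_add (setLIntegral_le_lintegral _ _) le_rfl
    _ = tailLIntegral μ g c + c * μ u := by rw [lintegral_indicator hmeas]; rfl

theorem setLIntegral_inter_lt_add_tailLIntegral_le {g : E → ℝ≥0∞} (hg : Measurable g)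
    (s : Set E) (c t : ℝ≥0∞) :
    ∫⁻ x in s ∩ {x | g x < t}, g x ∂μ + tailLIntegral μ g t ≤
      tailLIntegral μ g c + c * (μ s + μ {x | t ≤ g x}) := by
  have hdisj : Disjoint (s ∩ {x | g x < t}) {x | t ≤ g x} :=
    disjoint_left.2 fun x hx hx' => (show g x < t from hx.2).not_ge hx'
  calc ∫⁻ x in s ∩ {x | g x < t}, g x ∂μ + tailLIntegral μ g t
      = ∫⁻ x in s ∩ {x | g x < t} ∪ {x | t ≤ g x}, g x ∂μ :=
        (lintegral_union (measurableSet_le measurable_const hg) hdisj).symm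
    _ ≤ ∫⁻ x in s ∪ {x | t ≤ g x}, g x ∂μ :=
        lintegral_mono_set (union_subset_union_left _ inter_subset_left)
    _ ≤ tailLIntegral μ g c + c * μ (s ∪ {x | t ≤ g x}) :=
        lintegral_le_tailLIntegral_add_mul hg c _
    _ ≤ tailLIntegral μ g c + c * (μ s + μ {x | t ≤ g x}) := by
        gcongr; exact measure_union_le _ _

theorem tailDefect_le_of_lintegral_le {f : ℕ → E → ℝ≥0∞} {C : ℝ≥0∞}
    (hfC : ∀ n, ∫⁻ x, f n x ∂μ ≤ C) : tailDefect μ f ≤ C :=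
  (iInf_le _ 0).trans <| limsup_le_of_le (by isBoundedDefault) <|
    .of_forall fun n => (setLIntegral_le_lintegral _ _).trans (hfC n)

theorem tailDefect_comp_le (f : ℕ → E → ℝ≥0∞) {φ : ℕ → ℕ} (hφ : Tendsto φ atTop atTop) :
    tailDefect μ (f ∘ φ) ≤ tailDefect μ f :=
  iInf_mono fun c => hφ.limsup_comp_le_limsup (u := fun n => tailLIntegral μ (f n) c)

theorem exists_strictMono_tailDefect_le_liminf (f : ℕ → E → ℝ≥0∞) (t : ℕ → ℝ≥0)
    (hδ : tailDefect μ f ≠ ⊤) : ∃ φ : ℕ → ℕ, StrictMono φ ∧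
      tailDefect μ f ≤ liminf (fun k => tailLIntegral μ (f (φ k)) (t k)) atTop := by
  obtain ⟨φ, hφ, hle⟩ := extraction_forall_of_frequently fun k =>
    ENNReal.frequently_le_add_of_le_limsup hδ (ENNReal.inv_ne_zero.2 (ENNReal.natCast_ne_top k))
      (iInf_le _ (t k))
  refine ⟨φ, hφ, ?_⟩
  rw [← ENNReal.liminf_add_of_right_tendsto_zero ENNReal.tendsto_inv_nat_nhds_zero]
  exact le_liminf_of_le (by isBoundedDefault) (.of_forall hle)

theorem exists_pos_eventually_setLIntegral_inter_lt_le {g : ℕ → E → ℝ≥0∞} {t : ℕ → ℝ≥0}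
    (hg : ∀ k, Measurable (g k)) (hδ : tailDefect μ g ≠ ⊤)
    (hcapture : tailDefect μ g ≤ liminf (fun k => tailLIntegral μ (g k) (t k)) atTop)
    (hsmall : Tendsto (fun k => μ {x | (t k : ℝ≥0∞) ≤ g k x}) atTop (𝓝 0))
    {ε : ℝ≥0∞} (hε : ε ≠ 0) :
    ∃ d : ℝ, 0 < d ∧ ∀ᶠ k in atTop, ∀ s, μ s ≤ ENNReal.ofReal d →
      ∫⁻ x in s ∩ {x | g k x < t k}, g k x ∂μ ≤ ε := by
  set δ := tailDefect μ g
  set η := ε / 2 / 2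
  have hη : η ≠ 0 := by simp [η, hε]
  have hε_eq : η + η + (η + η) = ε := by simp only [η, ENNReal.add_halves]
  obtain ⟨c, hc⟩ : ∃ c : ℝ≥0, limsup (fun k => tailLIntegral μ (g k) c) atTop < δ + η :=
    iInf_lt_iff.1 (ENNReal.lt_add_right hδ hη)
  have hr : η / c ≠ 0 := ENNReal.div_ne_zero.2 ⟨hη, ENNReal.coe_ne_top⟩
  have hcμ : ∀ u : Set E, μ u ≤ η / c → c * μ u ≤ η := fun u hu =>
    (mul_le_mul_right hu _).trans ENNReal.mul_div_le
  obtain ⟨d, -, hd_pos, hd⟩ := ENNReal.lt_iff_exists_real_btwn.1 (pos_iff_ne_zero.2 hr)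
  refine ⟨d, ENNReal.ofReal_pos.1 hd_pos, ?_⟩
  filter_upwards [eventually_lt_of_limsup_lt hc,
    ENNReal.eventually_le_add_of_le_liminf hδ hη hcapture,
    hsmall.eventually (ge_mem_nhds (pos_iff_ne_zero.2 hr))] with k hup hlow hD s hs
  refine (ENNReal.add_le_add_iff_left hδ).1 ?_
  calc δ + ∫⁻ x in s ∩ {x | g k x < t k}, g k x ∂μ
      ≤ ∫⁻ x in s ∩ {x | g k x < t k}, g k x ∂μ + tailLIntegral μ (g k) (t k) + η := by
        rw [add_comm δ, add_assoc]; gcongr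
    _ ≤ tailLIntegral μ (g k) c + c * (μ s + μ {x | (t k : ℝ≥0∞) ≤ g k x}) + η :=
        add_le_add (setLIntegral_inter_lt_add_tailLIntegral_le (hg k) s c (t k)) le_rfl
    _ ≤ δ + η + (η + η) + η := by
        rw [mul_add]
        exact add_le_add (add_le_add hup.le (add_le_add (hcμ s (hs.trans hd.le)) (hcμ _ hD))) le_rfl
    _ = δ + ε := by rw [← hε_eq]; ring

theorem tsum_measure_two_pow_le_ne_top {g : ℕ → E → ℝ≥0∞} (hg : ∀ k, AEMeasurable (g k) μ)
    {C : ℝ≥0∞} (hC : C ≠ ⊤) (hgC : ∀ k, ∫⁻ x, g k x ∂μ ≤ C) :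
    ∑' k, μ {x | (2 : ℝ≥0∞) ^ k ≤ g k x} ≠ ⊤ := by
  refine ne_top_of_le_ne_top (b := ∑' k : ℕ, C * 2⁻¹ ^ k) ?_ (ENNReal.tsum_le_tsum fun k => ?_)
  · simpa [ENNReal.tsum_mul_left] using ENNReal.mul_ne_top hC ENNReal.ofNat_ne_top
  calc μ {x | (2 : ℝ≥0∞) ^ k ≤ g k x} ≤ (∫⁻ x, g k x ∂μ) / 2 ^ k :=
        meas_ge_le_lintegral_div (hg k) (by simp) (by simp)
    _ ≤ C * 2⁻¹ ^ k := by rw [div_eq_mul_inv, ENNReal.inv_pow]; gcongr; exact hgC k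

theorem exists_strictMono_biting {f : ℕ → E → ℝ≥0∞} (hf : ∀ n, Measurable (f n)) {C : ℝ≥0∞}
    (hC : C ≠ ⊤) (hfC : ∀ n, ∫⁻ x, f n x ∂μ ≤ C) :
    ∃ φ : ℕ → ℕ, StrictMono φ ∧ ∃ A : ℕ → Set E, (∀ m, MeasurableSet (A m)) ∧ Monotone A ∧
      μ (⋃ m, A m)ᶜ = 0 ∧ ∀ m, ∀ ε ≠ 0, ∃ d : ℝ, 0 < d ∧ ∀ᶠ k in atTop, ∀ s,
        μ s ≤ ENNReal.ofReal d → ∫⁻ x in s ∩ A m, f (φ k) x ∂μ ≤ ε := by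
  have hδ : tailDefect μ f ≠ ⊤ := ne_top_of_le_ne_top hC (tailDefect_le_of_lintegral_le hfC)
  obtain ⟨φ, hφ, hcapture⟩ := exists_strictMono_tailDefect_le_liminf f (fun k => 2 ^ k) hδ
  have hφδ := tailDefect_comp_le (μ := μ) f hφ.tendsto_atTop
  set D : ℕ → Set E := fun k => {x | (2 : ℝ≥0∞) ^ k ≤ f (φ k) x}
  have hD : ∑' k, μ (D k) ≠ ⊤ :=
    tsum_measure_two_pow_le_ne_top (fun k => (hf (φ k)).aemeasurable) hC fun k => hfC (φ k)
  refine ⟨φ, hφ, fun m => ⋂ k ≥ m, (D k)ᶜ,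
    fun m => .biInter (to_countable _) fun k _ => (measurableSet_le measurable_const (hf _)).compl,
    fun m m' hm => biInter_subset_biInter_left fun k hk => hm.trans hk, ?_, fun m ε hε => ?_⟩
  · refine mem_ae_iff.1 ?_
    filter_upwards [ae_eventually_notMem hD] with x hx
    obtain ⟨m, hm⟩ := eventually_atTop.1 hx
    exact mem_iUnion.2 ⟨m, mem_iInter₂.2 hm⟩
  obtain ⟨d, hd, hev⟩ := exists_pos_eventually_setLIntegral_inter_lt_le (fun k => hf (φ k))
    (ne_top_of_le_ne_top hδ hφδ) (hφδ.trans hcapture)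
    (ENNReal.tendsto_atTop_zero_of_tsum_ne_top (by simpa using hD)) hε
  refine ⟨d, hd, (hev.and (eventually_ge_atTop m)).mono fun k ⟨hk, hmk⟩ s hs => ?_⟩
  refine (lintegral_mono_set (inter_subset_inter_right _ fun x hx => ?_)).trans (hk s hs)
  simpa [D] using mem_iInter₂.1 hx k hmk

end Tails

theorem stmt_7_general {E : Type*} [MeasurableSpace E] (μ : Measure E)
    (ξ : ℕ → E → ℝ) (hint : ∀ n, Integrable (ξ n) μ)
    (B : ℝ) (hB : ∀ n, ∫ x, |ξ n x| ∂μ ≤ B) :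
    ∃ (nk : ℕ → ℕ), StrictMono nk ∧
      ∃ A : ℕ → Set E, (∀ k, MeasurableSet (A k)) ∧ Monotone A ∧
        (∀ m, UnifIntegrable (fun k => (A m).indicator (ξ (nk k))) 1 μ) ∧
        ∃ N : Set E, MeasurableSet N ∧ μ N = 0 ∧ (⋃ k, A k) = Nᶜ := by
  set F : ℕ → E → ℝ≥0∞ := fun n x => ‖(hint n).1.mk (ξ n) x‖ₑ
  have hF : ∀ n, (fun x => ‖ξ n x‖ₑ) =ᵐ[μ] F n := fun n => (hint n).1.ae_eq_mk.fun_comp _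
  have hFB : ∀ n, ∫⁻ x, F n x ∂μ ≤ ENNReal.ofReal B := fun n => by
    rw [← lintegral_congr_ae (hF n), ← ofReal_integral_norm_eq_lintegral_enorm (hint n)]
    exact ENNReal.ofReal_le_ofReal (by simpa only [Real.norm_eq_abs] using hB n)
  obtain ⟨φ, hφ, A, hA, hAmono, hnull, hbite⟩ := exists_strictMono_biting
    (fun n => (hint n).1.stronglyMeasurable_mk.measurable.enorm) ENNReal.ofReal_ne_top hFB
  refine ⟨φ, hφ, A, hA, hAmono, fun m => ?_, (⋃ m, A m)ᶜ, (MeasurableSet.iUnion hA).compl, hnull,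
    (compl_compl _).symm⟩
  refine unifIntegrable_of_eventually_cofinite le_rfl ENNReal.one_ne_top
    (fun k => memLp_one_iff_integrable.2 ((hint _).indicator (hA m))) fun ε hε => ?_
  obtain ⟨d, hd, hev⟩ := hbite m (ENNReal.ofReal ε) (ENNReal.ofReal_pos.2 hε).ne'
  refine ⟨d, hd, Nat.cofinite_eq_atTop ▸ hev.mono fun k hk s hs hμs => ?_⟩
  rw [indicator_indicator, eLpNorm_indicator_eq_eLpNorm_restrict (hs.inter (hA m)),
    eLpNorm_one_eq_lintegral_enorm, lintegral_congr_ae (ae_restrict_of_ae (hF _))]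
  exact hk s hμs

theorem stmt_7 {E : Type*} [MeasurableSpace E] (μ : Measure E) [IsFiniteMeasure μ]
    (ξ : ℕ → E → ℝ) (hint : ∀ n, Integrable (ξ n) μ)
    (B : ℝ) (hB : ∀ n, ∫ x, |ξ n x| ∂μ ≤ B) :
    ∃ (nk : ℕ → ℕ), StrictMono nk ∧
      ∃ A : ℕ → Set E, (∀ k, MeasurableSet (A k)) ∧ Monotone A ∧
        (∀ m, UnifIntegrable (fun k => (A m).indicator (ξ (nk k))) 1 μ) ∧
        ∃ N : Set E, MeasurableSet N ∧ μ N = 0 ∧ (⋃ k, A k) = Nᶜ :=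
  stmt_7_general μ ξ hint B hB
end

section
/- Let {ε_{n,k} : n ∈ ℕ, 1 ≤ k ≤ 2^{n−1}} be independent random variables with P(ε_{n,k} = 2ⁿ(1 − 4⁻ⁿ)) = 4⁻ⁿ and P(ε_{n,k} = −2⁻ⁿ) = 1 − 4⁻ⁿ. Then, almost surely, for all but finitely many n, ε_{n,k} = −2⁻ⁿ for every k ∈ {1, …, 2^{n−1}}; consequently ∑_{k=1}^{2^{n−1}} ε_{n,k}² → 0 almost surely as n → ∞. -/
/-!
First Borel–Cantelli lemma. At level `n` the probability that some `ε (n, k)` differs from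
`-2⁻ⁿ` is at most `2ⁿ⁻¹ · 4⁻ⁿ ≤ 2⁻ⁿ`, which is summable, so almost surely only finitely many
levels contain such a `k`. From then on the sum of squares is exactly `2ⁿ⁻¹ · 4⁻ⁿ → 0`.
-/

open MeasureTheory Filter ProbabilityTheory

lemma prob_ne_eq_of_prob_eq {Ω α : Type*} [MeasurableSpace Ω] [MeasurableSpace α]
    [MeasurableSingletonClass α] {P : Measure Ω} [IsProbabilityMeasure P] {X : Ω → α}
    (hX : Measurable X) {a : α} {p : ℝ} (hp : p ≤ 1)
    (h : P {ω | X ω = a} = ENNReal.ofReal (1 - p)) :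
    P {ω | X ω ≠ a} = ENNReal.ofReal p := by
  have hA : MeasurableSet {ω | X ω = a} := hX (measurableSet_singleton a)
  rw [← Set.compl_ofPred, prob_compl_eq_one_sub hA, h, ← ENNReal.ofReal_one,
    ← ENNReal.ofReal_sub _ (by linarith), sub_sub_cancel]

lemma ae_eventually_forall_of_tsum_ne_top {Ω ι : Type*} [MeasurableSpace Ω] {P : Measure Ω}
    (s : ℕ → Finset ι) (A : ℕ → ι → Set Ω)
    (h : ∑' n, ∑ k ∈ s n, P (A n k)ᶜ ≠ ⊤) :
    ∀ᵐ ω ∂P, ∀ᶠ n in atTop, ∀ k ∈ s n, ω ∈ A n k := by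
  have hbad : ∑' n, P (⋃ k ∈ s n, (A n k)ᶜ) ≠ ⊤ :=
    ne_top_of_le_ne_top h (ENNReal.tsum_le_tsum fun n => measure_biUnion_finset_le _ _)
  filter_upwards [ae_eventually_notMem hbad] with ω hω
  filter_upwards [hω] with n hn k hk
  by_contra hA
  exact hn (Set.mem_biUnion hk hA)

lemma two_pow_pred_mul_inv_four_pow_le (n : ℕ) :
    (2 : ℝ) ^ (n - 1) * ((4 : ℝ) ^ n)⁻¹ ≤ 2⁻¹ ^ n := by
  calc (2 : ℝ) ^ (n - 1) * ((4 : ℝ) ^ n)⁻¹ ≤ 2 ^ n * ((4 : ℝ) ^ n)⁻¹ := by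
        gcongr
        · norm_num
        · omega
    _ = 2⁻¹ ^ n := by
        rw [show (4 : ℝ) = 2 * 2 by norm_num, mul_pow, mul_inv, ← mul_assoc,
          mul_inv_cancel₀ (by positivity), one_mul, inv_pow]

lemma summable_two_pow_pred_mul_inv_four_pow :
    Summable fun n : ℕ => (2 : ℝ) ^ (n - 1) * ((4 : ℝ) ^ n)⁻¹ :=
  .of_nonneg_of_le (fun _ => by positivity) two_pow_pred_mul_inv_four_pow_le
    (summable_geometric_of_lt_one (by norm_num) (by norm_num))

lemma tendsto_two_pow_pred_mul_inv_four_pow :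
    Tendsto (fun n : ℕ => (2 : ℝ) ^ (n - 1) * ((4 : ℝ) ^ n)⁻¹) atTop (nhds 0) :=
  summable_two_pow_pred_mul_inv_four_pow.tendsto_atTop_zero

lemma sum_Icc_sq_of_eq_neg_inv_two_pow {n : ℕ} {x : ℕ → ℝ}
    (hx : ∀ k ∈ Finset.Icc 1 (2 ^ (n - 1)), x k = -((2 : ℝ) ^ n)⁻¹) :
    ∑ k ∈ Finset.Icc 1 (2 ^ (n - 1)), x k ^ 2 = (2 : ℝ) ^ (n - 1) * ((4 : ℝ) ^ n)⁻¹ := by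
  rw [Finset.sum_congr rfl fun k hk => by rw [hx k hk], Finset.sum_const, Nat.card_Icc,
    nsmul_eq_mul, neg_sq, inv_pow, ← pow_mul, mul_comm n, pow_mul]
  norm_num

theorem stmt_11_general {Ω : Type*} [MeasurableSpace Ω] (P : Measure Ω) [IsProbabilityMeasure P]
    (ε : ℕ × ℕ → Ω → ℝ) (hmeas : ∀ p, Measurable (ε p))
    (hdist : ∀ n, 1 ≤ n → ∀ k ∈ Finset.Icc 1 (2 ^ (n - 1)),
      P {ω | ε (n, k) ω = 2 ^ n * (1 - ((4 : ℝ) ^ n)⁻¹)} = ENNReal.ofReal ((4 : ℝ) ^ n)⁻¹ ∧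
      P {ω | ε (n, k) ω = -((2 : ℝ) ^ n)⁻¹} = ENNReal.ofReal (1 - ((4 : ℝ) ^ n)⁻¹)) :
    ∀ᵐ ω ∂P,
      (∀ᶠ n in atTop, ∀ k ∈ Finset.Icc 1 (2 ^ (n - 1)), ε (n, k) ω = -((2 : ℝ) ^ n)⁻¹) ∧
      Tendsto (fun n => ∑ k ∈ Finset.Icc 1 (2 ^ (n - 1)), (ε (n, k) ω) ^ 2) atTop (nhds 0) := by
  have hbad : ∀ n, ∀ k ∈ Finset.Icc 1 (2 ^ (n - 1)),
      P {ω | ε (n, k) ω ≠ -((2 : ℝ) ^ n)⁻¹} ≤ ENNReal.ofReal ((4 : ℝ) ^ n)⁻¹ := by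
    intro n k hk
    rcases Nat.eq_zero_or_pos n with rfl | hn
    · simpa using prob_le_one
    · have hp : ((4 : ℝ) ^ n)⁻¹ ≤ 1 := inv_le_one_of_one_le₀ (one_le_pow₀ (by norm_num))
      exact (prob_ne_eq_of_prob_eq (hmeas (n, k)) hp (hdist n hn k hk).2).le
  have hsum : ∀ n, ∑ k ∈ Finset.Icc 1 (2 ^ (n - 1)), P {ω | ε (n, k) ω ≠ -((2 : ℝ) ^ n)⁻¹}
      ≤ ENNReal.ofReal ((2 : ℝ) ^ (n - 1) * ((4 : ℝ) ^ n)⁻¹) := fun n => by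
    grw [Finset.sum_le_sum (hbad n)]
    simp [ENNReal.ofReal_mul, ENNReal.ofReal_pow]
  have htsum : ∑' n, ∑ k ∈ Finset.Icc 1 (2 ^ (n - 1)),
      P {ω | ε (n, k) ω ≠ -((2 : ℝ) ^ n)⁻¹} ≠ ⊤ := ne_top_of_le_ne_top ENNReal.ofReal_ne_top <|
    (ENNReal.tsum_le_tsum hsum).trans_eq
      (ENNReal.ofReal_tsum_of_nonneg (fun _ => by positivity)
        summable_two_pow_pred_mul_inv_four_pow).symm
  filter_upwards [ae_eventually_forall_of_tsum_ne_top _ (fun n k => {ω | ε (n, k) ω = _}) htsum]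
    with ω hgood
  refine ⟨hgood, tendsto_two_pow_pred_mul_inv_four_pow.congr' ?_⟩
  filter_upwards [hgood] with n hn using (sum_Icc_sq_of_eq_neg_inv_two_pow hn).symm

theorem stmt_11 {Ω : Type*} [MeasurableSpace Ω] (P : Measure Ω) [IsProbabilityMeasure P]
    (ε : ℕ × ℕ → Ω → ℝ) (hmeas : ∀ p, Measurable (ε p))
    (hindep : iIndepFun ε P)
    (hdist : ∀ n, 1 ≤ n → ∀ k ∈ Finset.Icc 1 (2 ^ (n - 1)),
      P {ω | ε (n, k) ω = 2 ^ n * (1 - ((4 : ℝ) ^ n)⁻¹)} = ENNReal.ofReal ((4 : ℝ) ^ n)⁻¹ ∧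
      P {ω | ε (n, k) ω = -((2 : ℝ) ^ n)⁻¹} = ENNReal.ofReal (1 - ((4 : ℝ) ^ n)⁻¹)) :
    ∀ᵐ ω ∂P,
      (∀ᶠ n in atTop, ∀ k ∈ Finset.Icc 1 (2 ^ (n - 1)), ε (n, k) ω = -((2 : ℝ) ^ n)⁻¹) ∧
      Tendsto (fun n => ∑ k ∈ Finset.Icc 1 (2 ^ (n - 1)), (ε (n, k) ω) ^ 2) atTop (nhds 0) :=
  stmt_11_general P ε hmeas hdist
end

section
/- Let {ε_{n,k}} be as above and fix t ∈ [0,1]. Let F_{n,t} = {k ∈ {1,…,2^{n−1}} : (2k−1)/2ⁿ ≤ t}, and set Xₙ(t) = ∑_{k ∈ F_{n,t}} ε_{n,k}. Then Xₙ(t) → −t/2 almost surely as n → ∞. -/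
/-!
By the first Borel–Cantelli lemma, since `∑ₙ 2ⁿ⁻¹ · 4⁻ⁿ < ∞`, almost surely `ε (n, k) = -2⁻ⁿ` for
every `k ≤ 2ⁿ⁻¹` once `n` is large. From then on `Xₙ(t) = -#F_{n,t} / 2ⁿ`, and
`#F_{n,t} = ⌊(2ⁿ t + 1) / 2⌋`, so `#F_{n,t} / 2ⁿ → t / 2`.
-/

open MeasureTheory Filter ProbabilityTheory

open Finset ENNReal

/-- The paper's `F_{n,t}`: `(2k - 1) / 2ⁿ` is the midpoint of the `k`-th dyadic interval of
length `2¹⁻ⁿ`. -/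
noncomputable def dyadicMidpointIndices (n : ℕ) (t : ℝ) : Finset ℕ :=
  (Icc 1 (2 ^ (n - 1))).filter fun k : ℕ => (2 * (k : ℝ) - 1) / 2 ^ n ≤ t

lemma dyadicMidpointIndices_eq_Icc {n : ℕ} (hn : 1 ≤ n) {t : ℝ} (ht : t ∈ Set.Icc (0 : ℝ) 1) :
    dyadicMidpointIndices n t = Icc 1 ⌊(2 ^ n * t + 1) / 2⌋₊ := by
  have h2n : (0 : ℝ) < 2 ^ n := by positivity
  have hpow : 2 ^ n = 2 * 2 ^ (n - 1) := by rw [← pow_succ']; congr 1; omega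
  ext k
  have hx : (0 : ℝ) ≤ (2 ^ n * t + 1) / 2 := by have := ht.1; positivity
  simp only [dyadicMidpointIndices, mem_filter, mem_Icc, div_le_iff₀ h2n, Nat.le_floor_iff hx,
    le_div_iff₀ (two_pos : (0 : ℝ) < 2)]
  constructor
  · rintro ⟨⟨hk1, -⟩, hkt⟩
    exact ⟨hk1, by linarith⟩
  · rintro ⟨hk1, hkt⟩
    refine ⟨⟨hk1, ?_⟩, by linarith⟩
    have : (k * 2 : ℝ) ≤ 2 ^ n + 1 := by nlinarith [ht.2]
    have : k * 2 ≤ 2 ^ n + 1 := by exact_mod_cast this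
    -- `2ⁿ` is even, so the `+ 1` is absorbed
    omega

lemma tendsto_card_dyadicMidpointIndices_div {t : ℝ} (ht : t ∈ Set.Icc (0 : ℝ) 1) :
    Tendsto (fun n => (#(dyadicMidpointIndices n t) : ℝ) / 2 ^ n) atTop (nhds (t / 2)) := by
  have hgeom : Tendsto (fun n : ℕ => (2⁻¹ : ℝ) ^ n) atTop (nhds 0) :=
    tendsto_pow_atTop_nhds_zero_of_lt_one (by norm_num) (by norm_num)
  refine tendsto_of_tendsto_of_tendsto_of_le_of_le' (by simpa using hgeom.const_sub (t / 2))
    (by simpa using hgeom.const_add (t / 2)) ?_ ?_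
  all_goals
    filter_upwards [eventually_ge_atTop 1] with n hn
    have hx : (0 : ℝ) ≤ (2 ^ n * t + 1) / 2 := by have := ht.1; positivity
    have hfl := Nat.floor_le hx
    have hlt := Nat.sub_one_lt_floor ((2 ^ n * t + 1) / 2)
    rw [dyadicMidpointIndices_eq_Icc hn ht, Nat.card_Icc, Nat.add_sub_cancel]
    have h2n : (0 : ℝ) < 2 ^ n := by positivity
  · rw [le_div_iff₀ h2n, sub_mul, inv_mul_cancel₀ h2n.ne']; linarith
  · rw [div_le_iff₀ h2n, add_mul, inv_mul_cancel₀ h2n.ne']; linarith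

section

variable {Ω ι : Type*} [MeasurableSpace Ω]

lemma measure_compl_le_ofReal_of_measure_eq (μ : Measure Ω) [IsProbabilityMeasure μ]
    {s : Set Ω} (hs : MeasurableSet s) {q : ℝ} (h : μ s = ENNReal.ofReal (1 - q)) :
    μ sᶜ ≤ ENNReal.ofReal q := by
  rw [prob_compl_eq_one_sub hs, h, tsub_le_iff_right, ← ENNReal.ofReal_one]
  calc ENNReal.ofReal 1 = ENNReal.ofReal (q + (1 - q)) := by ring_nf
    _ ≤ _ := ENNReal.ofReal_add_le

lemma ae_eventually_forall_notMem_of_tsum_ne_top (μ : Measure Ω) (S : ℕ → Finset ι)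
    (s : ℕ → ι → Set Ω) (h : ∑' n, ∑ k ∈ S n, μ (s n k) ≠ ∞) :
    ∀ᵐ ω ∂μ, ∀ᶠ n in atTop, ∀ k ∈ S n, ω ∉ s n k := by
  have hunion : ∑' n, μ (⋃ k ∈ S n, s n k) ≠ ∞ :=
    ne_top_of_le_ne_top h (ENNReal.tsum_le_tsum fun n => measure_biUnion_finset_le _ _)
  filter_upwards [ae_eventually_notMem hunion] with ω hω
  filter_upwards [hω] with n hn k hk hmem
  exact hn (Set.mem_biUnion hk hmem)

lemma sum_measure_ne_neg_inv_two_pow_le (P : Measure Ω) [IsProbabilityMeasure P]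
    (ε : ℕ × ℕ → Ω → ℝ) (hmeas : ∀ p, Measurable (ε p))
    (hdist : ∀ n, 1 ≤ n → ∀ k ∈ Icc 1 (2 ^ (n - 1)),
      P {ω | ε (n, k) ω = -((2 : ℝ) ^ n)⁻¹} = ENNReal.ofReal (1 - ((4 : ℝ) ^ n)⁻¹)) (n : ℕ) :
    ∑ k ∈ Icc 1 (2 ^ (n - 1)), P {ω | ε (n, k) ω ≠ -((2 : ℝ) ^ n)⁻¹} ≤
      ENNReal.ofReal (((2 : ℝ) ^ n)⁻¹) := by
  rcases Nat.eq_zero_or_pos n with rfl | hn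
  · simpa using prob_le_one
  calc ∑ k ∈ Icc 1 (2 ^ (n - 1)), P {ω | ε (n, k) ω ≠ -((2 : ℝ) ^ n)⁻¹}
      ≤ ∑ k ∈ Icc 1 (2 ^ (n - 1)), ENNReal.ofReal ((4 : ℝ) ^ n)⁻¹ := by
        gcongr with k hk
        exact measure_compl_le_ofReal_of_measure_eq P
          (hmeas _ (measurableSet_singleton _)) (hdist n hn k hk)
    _ = ENNReal.ofReal (2 ^ (n - 1) * ((4 : ℝ) ^ n)⁻¹) := by
        rw [sum_const, Nat.card_Icc, nsmul_eq_mul, ENNReal.ofReal_mul (by positivity)]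
        simp
    _ ≤ ENNReal.ofReal (((2 : ℝ) ^ n)⁻¹) := by
        gcongr
        rw [show (4 : ℝ) ^ n = 2 ^ n * 2 ^ n by rw [← mul_pow]; norm_num, mul_inv,
          ← mul_assoc]
        refine mul_le_of_le_one_left (by positivity) ?_
        exact mul_inv_le_one_of_le₀ (pow_le_pow_right₀ one_le_two (Nat.sub_le n 1))
          (by positivity)

end

theorem stmt_13_general {Ω : Type*} [MeasurableSpace Ω] (P : Measure Ω) [IsProbabilityMeasure P]
    (ε : ℕ × ℕ → Ω → ℝ) (hmeas : ∀ p, Measurable (ε p))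
    (hdist : ∀ n, 1 ≤ n → ∀ k ∈ Finset.Icc 1 (2 ^ (n - 1)),
      P {ω | ε (n, k) ω = 2 ^ n * (1 - ((4 : ℝ) ^ n)⁻¹)} = ENNReal.ofReal ((4 : ℝ) ^ n)⁻¹ ∧
      P {ω | ε (n, k) ω = -((2 : ℝ) ^ n)⁻¹} = ENNReal.ofReal (1 - ((4 : ℝ) ^ n)⁻¹))
    (t : ℝ) (ht : t ∈ Set.Icc (0 : ℝ) 1) :
    ∀ᵐ ω ∂P,
      Tendsto
        (fun n => ∑ k ∈ (Finset.Icc 1 (2 ^ (n - 1))).filter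
            (fun (k : ℕ) => ((2 * (k : ℝ) - 1) / 2 ^ n) ≤ t), ε (n, k) ω)
        atTop (nhds (-t / 2)) := by
  have htsum :
      ∑' n, ∑ k ∈ Icc 1 (2 ^ (n - 1)), P {ω | ε (n, k) ω ≠ -((2 : ℝ) ^ n)⁻¹} ≠ ∞ := by
    refine ne_top_of_le_ne_top ?_ (ENNReal.tsum_le_tsum
      (sum_measure_ne_neg_inv_two_pow_le P ε hmeas fun n hn k hk => (hdist n hn k hk).2))
    rw [← ENNReal.ofReal_tsum_of_nonneg (fun n => by positivity)
      (by simpa using summable_geometric_two)]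
    exact ENNReal.ofReal_ne_top
  filter_upwards [ae_eventually_forall_notMem_of_tsum_ne_top P _ _ htsum] with ω hω
  have hsum : ∀ᶠ n in atTop, -((#(dyadicMidpointIndices n t) : ℝ) / 2 ^ n) =
      ∑ k ∈ dyadicMidpointIndices n t, ε (n, k) ω := by
    filter_upwards [hω] with n hn
    rw [sum_congr rfl fun k (hk : k ∈ dyadicMidpointIndices n t) =>
        not_not.mp (hn k (mem_filter.mp hk).1),
      sum_const, nsmul_eq_mul, div_eq_mul_inv, neg_mul_eq_mul_neg]
  rw [neg_div]
  exact ((tendsto_card_dyadicMidpointIndices_div ht).neg).congr' hsum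

theorem stmt_13 {Ω : Type*} [MeasurableSpace Ω] (P : Measure Ω) [IsProbabilityMeasure P]
    (ε : ℕ × ℕ → Ω → ℝ) (hmeas : ∀ p, Measurable (ε p))
    (hindep : iIndepFun ε P)
    (hdist : ∀ n, 1 ≤ n → ∀ k ∈ Finset.Icc 1 (2 ^ (n - 1)),
      P {ω | ε (n, k) ω = 2 ^ n * (1 - ((4 : ℝ) ^ n)⁻¹)} = ENNReal.ofReal ((4 : ℝ) ^ n)⁻¹ ∧
      P {ω | ε (n, k) ω = -((2 : ℝ) ^ n)⁻¹} = ENNReal.ofReal (1 - ((4 : ℝ) ^ n)⁻¹))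
    (t : ℝ) (ht : t ∈ Set.Icc (0 : ℝ) 1) :
    ∀ᵐ ω ∂P,
      Tendsto
        (fun n => ∑ k ∈ (Finset.Icc 1 (2 ^ (n - 1))).filter
            (fun (k : ℕ) => ((2 * (k : ℝ) - 1) / 2 ^ n) ≤ t), ε (n, k) ω)
        atTop (nhds (-t / 2)) :=
  stmt_13_general P ε hmeas hdist t ht
end

section
/- Fix η > 0 and T > 0. Let Z^{λ,η} solve dZ = −λZ dt + η dW with Z₀ = 0. Then Z^{λ,η} → 0 as λ → ∞ in the topology of uniform convergence on [0,T] in probability; i.e., for every ε > 0, P(sup_{t ≤ T} |Z^{λ,η}_t| ≥ ε) → 0 as λ → ∞. -/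
/-!
The convergence holds path by path. Variation of constants writes the solution as
`Z_t = η (e^{-λt} W_t + λ ∫₀ᵗ e^{-λ(t-s)} (W_t - W_s) ds)`; splitting the integral according to
whether `t - s < δ` bounds `|Z_t|` on `[0, T]` by `η (a + 2b (1 + λT) e^{-λδ})`, where `a` bounds
the increments of the path over lags `< δ` and `b` bounds the path itself. The exceptional null
set of the equation depends on `λ`, so instead of an almost sure limit we use `λ`-independent
events on which `a` and `b` are controlled: by continuity of the paths they exhaust `Ω` up to a
null set, and on them the bound is `< ε` for all large `λ`.
-/

open MeasureTheory Filter ProbabilityTheory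

/-- `Z` is a (pathwise) solution of the Ornstein–Uhlenbeck equation
`dZ = -λ Z dt + η dW`, `Z₀ = 0`, on `[0, T]`, in integral form. -/
def SolvesOU {Ω : Type*} [MeasurableSpace Ω] (P : Measure Ω) (lam η : ℝ)
    (W Z : ℝ → Ω → ℝ) (T : ℝ) : Prop :=
  ∀ᵐ ω ∂P, ContinuousOn (fun t => Z t ω) (Set.Icc 0 T) ∧ Z 0 ω = 0 ∧
    ∀ t ∈ Set.Icc (0 : ℝ) T,
      Z t ω = -lam * (∫ s in (0 : ℝ)..t, Z s ω) + η * W t ω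

/-- `W` is a standard Brownian motion under `P`. -/
def IsBrownianMotion {Ω : Type*} [MeasurableSpace Ω] (P : Measure Ω)
    (W : ℝ → Ω → ℝ) : Prop :=
  (∀ t, Measurable (W t)) ∧
  (∀ᵐ ω ∂P, W 0 ω = 0 ∧ Continuous fun t => W t ω) ∧
  (∀ s t : ℝ, 0 ≤ s → s ≤ t →
    Measure.map (fun ω => W t ω - W s ω) P = gaussianReal 0 (Real.toNNReal (t - s))) ∧
  (∀ (n : ℕ) (u : ℕ → ℝ), Monotone u → 0 ≤ u 0 →
    iIndepFun
      (fun i : Fin n => fun ω => W (u (i + 1)) ω - W (u i) ω) P)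

open Set Real
open scoped Topology

theorem exp_mul_integral_eq_of_integral_eq {lam η T : ℝ} {w z : ℝ → ℝ}
    (hw : ContinuousOn w (Icc 0 T)) (hz : ContinuousOn z (Icc 0 T))
    (heq : ∀ t ∈ Icc 0 T, z t = -lam * (∫ s in (0 : ℝ)..t, z s) + η * w t)
    {t : ℝ} (ht : t ∈ Icc 0 T) :
    exp (lam * t) * ∫ s in (0 : ℝ)..t, z s = η * ∫ s in (0 : ℝ)..t, exp (lam * s) * w s := by
  have hsub : Icc 0 t ⊆ Icc 0 T := Icc_subset_Icc_right ht.2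
  have hY : ContinuousOn (fun x => ∫ s in (0 : ℝ)..x, z s) (Icc 0 t) := by
    have := intervalIntegral.continuousOn_primitive_interval (μ := volume) (a := 0) (b := t)
      (f := z) (by rw [uIcc_of_le ht.1]; exact (hz.mono hsub).integrableOn_Icc)
    rwa [uIcc_of_le ht.1] at this
  have hderiv : ∀ x ∈ Ioo 0 t, HasDerivAt (fun x => exp (lam * x) * ∫ s in (0 : ℝ)..x, z s)
      (exp (lam * x) * (η * w x)) x := by
    intro x hx
    have hxT : x ∈ Ioo 0 T := ⟨hx.1, hx.2.trans_le ht.2⟩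
    have hYx : HasDerivAt (fun x => ∫ s in (0 : ℝ)..x, z s) (z x) x :=
      intervalIntegral.integral_hasDerivAt_right
        (hz.mono (uIcc_subset_Icc ⟨le_rfl, ht.1.trans ht.2⟩
          (Ioo_subset_Icc_self hxT))).intervalIntegrable
        ((hz.mono Ioo_subset_Icc_self).stronglyMeasurableAtFilter isOpen_Ioo x hxT)
        (hz.continuousAt (Icc_mem_nhds hxT.1 hxT.2))
    refine ((((hasDerivAt_id x).const_mul lam).exp).mul hYx).congr_deriv ?_
    rw [heq x (Ioo_subset_Icc_self hxT)]
    simp only [id, mul_one]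
    ring
  have hint : IntervalIntegrable (fun x => exp (lam * x) * (η * w x)) volume 0 t := by
    apply ContinuousOn.intervalIntegrable
    rw [uIcc_of_le ht.1]
    exact (by fun_prop : Continuous fun x => exp (lam * x)).continuousOn.mul
      (continuousOn_const.mul (hw.mono hsub))
  have := intervalIntegral.integral_eq_sub_of_hasDerivAt_of_le ht.1
    ((by fun_prop : Continuous fun x => exp (lam * x)).continuousOn.mul hY) hderiv hint
  rw [← intervalIntegral.integral_const_mul]
  simpa [mul_left_comm] using this.symm

theorem integral_mul_exp_mul_sub (lam t : ℝ) :
    ∫ s in (0 : ℝ)..t, lam * exp (lam * (s - t)) = 1 - exp (-(lam * t)) := by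
  have hderiv : ∀ s ∈ uIcc 0 t,
      HasDerivAt (fun s => exp (lam * (s - t))) (lam * exp (lam * (s - t))) s := by
    intro s _
    simpa [mul_comm] using (((hasDerivAt_id s).sub_const t).const_mul lam).exp
  rw [intervalIntegral.integral_eq_sub_of_hasDerivAt hderiv
    (Continuous.intervalIntegrable (by fun_prop) _ _)]
  simp

theorem eq_exp_mul_add_integral_of_integral_eq {lam η T : ℝ} {w z : ℝ → ℝ}
    (hw : ContinuousOn w (Icc 0 T)) (hz : ContinuousOn z (Icc 0 T))
    (heq : ∀ t ∈ Icc 0 T, z t = -lam * (∫ s in (0 : ℝ)..t, z s) + η * w t)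
    {t : ℝ} (ht : t ∈ Icc 0 T) :
    z t = η * (exp (-(lam * t)) * w t
      + lam * ∫ s in (0 : ℝ)..t, exp (lam * (s - t)) * (w t - w s)) := by
  have hwt : ContinuousOn w (uIcc 0 t) := hw.mono (uIcc_subset_Icc ⟨le_rfl, ht.1.trans ht.2⟩ ht)
  have hsplit : ∫ s in (0 : ℝ)..t, exp (lam * (s - t)) * (w t - w s)
      = w t * (∫ s in (0 : ℝ)..t, exp (lam * (s - t)))
        - exp (-(lam * t)) * ∫ s in (0 : ℝ)..t, exp (lam * s) * w s := by
    have h1 : IntervalIntegrable (fun s => w t * exp (lam * (s - t))) volume 0 t :=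
      Continuous.intervalIntegrable (by fun_prop) _ _
    have h2 : IntervalIntegrable (fun s => exp (-(lam * t)) * (exp (lam * s) * w s)) volume 0 t :=
      (((by fun_prop : Continuous fun s => exp (lam * s)).continuousOn.mul
        hwt).intervalIntegrable).const_mul _
    rw [← intervalIntegral.integral_const_mul, ← intervalIntegral.integral_const_mul,
      ← intervalIntegral.integral_sub h1 h2]
    congr 1 with s
    have : exp (lam * (s - t)) = exp (-(lam * t)) * exp (lam * s) := by
      rw [← exp_add]; ring_nf
    rw [this]
    ring
  have hkernel := integral_mul_exp_mul_sub lam t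
  rw [intervalIntegral.integral_const_mul] at hkernel
  have hY := exp_mul_integral_eq_of_integral_eq hw hz heq ht
  have hexp : exp (-(lam * t)) * exp (lam * t) = 1 := by rw [← exp_add]; simp
  rw [heq t ht, hsplit]
  linear_combination (-lam * exp (-(lam * t))) * hY - (η * w t) * hkernel
    + (lam * (∫ s in (0 : ℝ)..t, z s)) * hexp

def OscLE (w : ℝ → ℝ) (S : Set ℝ) (δ a : ℝ) : Prop :=
  ∀ u ∈ S, ∀ v ∈ S, |u - v| < δ → |w u - w v| ≤ a

theorem exp_mul_abs_sub_le {lam δ a b T : ℝ} {w : ℝ → ℝ} (hlam : 0 ≤ lam) (ha : 0 ≤ a)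
    (hosc : OscLE w (Icc 0 T) δ a) (hb : ∀ t ∈ Icc 0 T, |w t| ≤ b)
    {s t : ℝ} (hs : s ∈ Icc 0 T) (ht : t ∈ Icc 0 T) (hst : s ≤ t) :
    exp (lam * (s - t)) * |w t - w s| ≤ a * exp (lam * (s - t)) + 2 * b * exp (-(lam * δ)) := by
  have hb0 : 0 ≤ b := (abs_nonneg _).trans (hb t ht)
  rcases lt_or_ge (t - s) δ with hclose | hfar
  · have hw : |w t - w s| ≤ a := hosc t ht s hs (by rwa [abs_of_nonneg (sub_nonneg.2 hst)])
    have : 0 ≤ 2 * b * exp (-(lam * δ)) := by positivity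
    nlinarith [exp_pos (lam * (s - t))]
  · have hexp : exp (lam * (s - t)) ≤ exp (-(lam * δ)) :=
      exp_le_exp.2 (by nlinarith)
    have hw : |w t - w s| ≤ 2 * b := (abs_sub _ _).trans (by linarith [hb t ht, hb s hs])
    have : 0 ≤ a * exp (lam * (s - t)) := by positivity
    nlinarith [exp_pos (lam * (s - t)), abs_nonneg (w t - w s)]

theorem abs_le_of_integral_eq {lam η T δ a b : ℝ} {w z : ℝ → ℝ} (hlam : 0 ≤ lam) (hη : 0 ≤ η)
    (ha : 0 ≤ a) (hw : ContinuousOn w (Icc 0 T)) (hw0 : w 0 = 0) (hz : ContinuousOn z (Icc 0 T))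
    (heq : ∀ t ∈ Icc 0 T, z t = -lam * (∫ s in (0 : ℝ)..t, z s) + η * w t)
    (hosc : OscLE w (Icc 0 T) δ a) (hb : ∀ t ∈ Icc 0 T, |w t| ≤ b) {t : ℝ} (ht : t ∈ Icc 0 T) :
    |z t| ≤ η * (a + 2 * b * ((1 + lam * T) * exp (-(lam * δ)))) := by
  set c := 2 * b * exp (-(lam * δ))
  have hc : 0 ≤ c := by have := (abs_nonneg _).trans (hb t ht); positivity
  have h0 : (0 : ℝ) ∈ Icc 0 T := ⟨le_rfl, ht.1.trans ht.2⟩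
  have hfirst : exp (-(lam * t)) * |w t| ≤ a * exp (-(lam * t)) + c := by
    simpa [hw0] using exp_mul_abs_sub_le hlam ha hosc hb h0 ht ht.1
  have hsecond : |∫ s in (0 : ℝ)..t, exp (lam * (s - t)) * (w t - w s)|
      ≤ ∫ s in (0 : ℝ)..t, (a * exp (lam * (s - t)) + c) := by
    have hg : IntervalIntegrable (fun s => a * exp (lam * (s - t)) + c) volume 0 t :=
      Continuous.intervalIntegrable (by fun_prop) _ _
    rw [← Real.norm_eq_abs]
    refine intervalIntegral.norm_integral_le_of_norm_le ht.1 (ae_of_all _ fun s hs => ?_) hg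
    rw [Real.norm_eq_abs, abs_mul, abs_of_pos (exp_pos _)]
    exact exp_mul_abs_sub_le hlam ha hosc hb ⟨hs.1.le, hs.2.trans ht.2⟩ ht hs.2
  have hkernel := integral_mul_exp_mul_sub lam t
  rw [intervalIntegral.integral_const_mul] at hkernel
  have hval : lam * ∫ s in (0 : ℝ)..t, (a * exp (lam * (s - t)) + c)
      = a * (1 - exp (-(lam * t))) + lam * t * c := by
    rw [intervalIntegral.integral_add
      ((by fun_prop : Continuous fun s => a * exp (lam * (s - t))).intervalIntegrable _ _)
      intervalIntegrable_const, intervalIntegral.integral_const_mul,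
      intervalIntegral.integral_const, ← hkernel]
    simp only [sub_zero, smul_eq_mul]
    ring
  set I := ∫ s in (0 : ℝ)..t, exp (lam * (s - t)) * (w t - w s)
  calc |z t|
      = η * |exp (-(lam * t)) * w t + lam * I| := by
        rw [eq_exp_mul_add_integral_of_integral_eq hw hz heq ht, abs_mul, abs_of_nonneg hη]
    _ ≤ η * (exp (-(lam * t)) * |w t| + lam * |I|) := by
        gcongr
        refine (abs_add_le _ _).trans_eq ?_
        rw [abs_mul, abs_mul, abs_of_pos (exp_pos _), abs_of_nonneg hlam]
    _ ≤ η * ((a * exp (-(lam * t)) + c)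
          + lam * ∫ s in (0 : ℝ)..t, (a * exp (lam * (s - t)) + c)) := by
        gcongr
    _ = η * (a + (1 + lam * t) * c) := by rw [hval]; ring
    _ ≤ η * (a + 2 * b * ((1 + lam * T) * exp (-(lam * δ)))) := by
        have : (1 + lam * t) * c ≤ (1 + lam * T) * c := by gcongr; exact ht.2
        linarith [mul_le_mul_of_nonneg_left this hη]

theorem OscLE.mono {w : ℝ → ℝ} {S S' : Set ℝ} {δ δ' a : ℝ} (h : OscLE w S δ a) (hS : S' ⊆ S)
    (hδ : δ' ≤ δ) : OscLE w S' δ' a :=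
  fun u hu v hv huv => h u (hS hu) v (hS hv) (huv.trans_le hδ)

theorem OscLE.closure {w : ℝ → ℝ} {S : Set ℝ} {δ a : ℝ} (hw : Continuous w) (h : OscLE w S δ a) :
    OscLE w (closure S) δ a := by
  intro u hu v hv huv
  have hmem : (u, v) ∈ _root_.closure ({x : ℝ × ℝ | |x.1 - x.2| < δ} ∩ S ×ˢ S) :=
    (isOpen_lt (by fun_prop : Continuous fun x : ℝ × ℝ => |x.1 - x.2|)
      continuous_const).inter_closure ⟨huv, by rw [closure_prod_eq]; exact ⟨hu, hv⟩⟩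
  exact closure_minimal (fun x hx => h x.1 hx.2.1 x.2 hx.2.2 hx.1)
    (isClosed_le (by fun_prop : Continuous fun x : ℝ × ℝ => |w x.1 - w x.2|)
      continuous_const) hmem

theorem IsCompact.exists_oscLE {w : ℝ → ℝ} {K : Set ℝ} (hK : IsCompact K) (hw : Continuous w)
    {a : ℝ} (ha : 0 < a) : ∃ δ > 0, OscLE w K δ a := by
  obtain ⟨δ, hδ, h⟩ :=
    Metric.uniformContinuousOn_iff.1 (hK.uniformContinuousOn_of_continuous hw.continuousOn) a ha
  exact ⟨δ, hδ, fun u hu v hv huv => (h u hu v hv huv).le⟩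

theorem Icc_subset_closure_Icc_inter_range_ratCast {a b : ℝ} (h : a < b) :
    Icc a b ⊆ closure (Icc a b ∩ range ((↑) : ℚ → ℝ)) := by
  calc Icc a b = closure (Ioo a b) := (closure_Ioo h.ne).symm
    _ ⊆ closure (Ioo a b ∩ range ((↑) : ℚ → ℝ)) :=
      closure_minimal (Rat.denseRange_cast.open_subset_closure_inter isOpen_Ioo) isClosed_closure
    _ ⊆ closure (Icc a b ∩ range ((↑) : ℚ → ℝ)) :=
      closure_mono (inter_subset_inter_left _ Ioo_subset_Icc_self)

theorem tendsto_measure_compl_of_monotone {Ω : Type*} [MeasurableSpace Ω] {μ : Measure Ω}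
    [IsFiniteMeasure μ] {s : ℕ → Set Ω} (hs : ∀ n, MeasurableSet (s n)) (hmono : Monotone s)
    (hae : ∀ᵐ ω ∂μ, ∃ n, ω ∈ s n) : Tendsto (fun n => μ (s n)ᶜ) atTop (𝓝 0) := by
  have h := tendsto_measure_iInter_atTop (μ := μ) (fun n => (hs n).compl.nullMeasurableSet)
    (fun m n hmn => compl_subset_compl.2 (hmono hmn)) ⟨0, measure_ne_top μ _⟩
  have hnull : μ (⋃ n, s n)ᶜ = 0 := by
    rw [← mem_ae_iff]
    filter_upwards [hae] with ω hω using mem_iUnion.2 hω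
  rwa [← compl_iUnion, hnull] at h

theorem tendsto_one_add_mul_mul_exp_neg_mul_atTop {δ : ℝ} (hδ : 0 < δ) (T : ℝ) :
    Tendsto (fun lam => (1 + lam * T) * exp (-(lam * δ))) atTop (𝓝 0) := by
  have hscale : Tendsto (fun lam => lam * δ) atTop atTop := tendsto_id.atTop_mul_const hδ
  have h := (tendsto_exp_neg_atTop_nhds_zero.comp hscale).add
    (((tendsto_pow_mul_exp_neg_atTop_nhds_zero 1).comp hscale).const_mul (T / δ))
  rw [mul_zero, add_zero] at h
  refine h.congr fun lam => ?_
  simp only [Function.comp, pow_one]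
  field_simp

section Events

variable {Ω : Type*}

/-- Only rational times enter, so that the event is measurable. -/
def oscBoundSet (W : ℝ → Ω → ℝ) (T a : ℝ) (n : ℕ) : Set Ω :=
  {ω | OscLE (fun t => W t ω) (Icc 0 T ∩ range ((↑) : ℚ → ℝ)) (n + 1)⁻¹ a ∧
    ∀ t ∈ Icc 0 T ∩ range ((↑) : ℚ → ℝ), |W t ω| ≤ n}

theorem measurableSet_oscBoundSet [MeasurableSpace Ω] {W : ℝ → Ω → ℝ}
    (hW : ∀ t, Measurable (W t)) (T a : ℝ) (n : ℕ) : MeasurableSet (oscBoundSet W T a n) := by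
  have hQ : (Icc 0 T ∩ range ((↑) : ℚ → ℝ)).Countable :=
    (countable_range _).mono inter_subset_right
  have hset : oscBoundSet W T a n =
      (⋂ u ∈ Icc 0 T ∩ range ((↑) : ℚ → ℝ), ⋂ v ∈ Icc 0 T ∩ range ((↑) : ℚ → ℝ),
        {ω | |u - v| < ((n : ℝ) + 1)⁻¹ → |W u ω - W v ω| ≤ a}) ∩
      ⋂ t ∈ Icc 0 T ∩ range ((↑) : ℚ → ℝ), {ω | |W t ω| ≤ n} := by
    ext ω
    simp only [oscBoundSet, OscLE, mem_ofPred_eq, mem_inter_iff, mem_iInter]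
  rw [hset]
  exact (MeasurableSet.biInter hQ fun u _ => MeasurableSet.biInter hQ fun v _ =>
      (MeasurableSet.const _).imp
        (measurableSet_le ((hW u).sub (hW v)).abs measurable_const)).inter
    (MeasurableSet.biInter hQ fun t _ => measurableSet_le (hW t).abs measurable_const)

theorem monotone_oscBoundSet (W : ℝ → Ω → ℝ) (T a : ℝ) : Monotone (oscBoundSet W T a) := by
  intro m n hmn ω ⟨hosc, hbdd⟩
  refine ⟨hosc.mono subset_rfl ?_, fun t ht => (hbdd t ht).trans (by exact_mod_cast hmn)⟩
  gcongr

theorem exists_mem_oscBoundSet {W : ℝ → Ω → ℝ} {ω : Ω} (hW : Continuous fun t => W t ω)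
    (T : ℝ) {a : ℝ} (ha : 0 < a) : ∃ n, ω ∈ oscBoundSet W T a n := by
  obtain ⟨δ, hδ, hosc⟩ := isCompact_Icc.exists_oscLE (K := Icc 0 T) hW ha
  obtain ⟨n₁, hn₁⟩ := exists_nat_one_div_lt hδ
  obtain ⟨C, hC⟩ := isCompact_Icc.exists_bound_of_continuousOn (s := Icc 0 T) hW.continuousOn
  obtain ⟨n₂, hn₂⟩ := exists_nat_ge C
  refine ⟨max n₁ n₂, hosc.mono inter_subset_left ?_, fun t ht => (hC t ht.1).trans ?_⟩
  · rw [← one_div]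
    refine le_trans ?_ hn₁.le
    gcongr
    exact_mod_cast le_max_left n₁ n₂
  · exact hn₂.trans (by exact_mod_cast le_max_right n₁ n₂)

theorem oscLE_Icc_of_mem_oscBoundSet {W : ℝ → Ω → ℝ} {T a : ℝ} {n : ℕ} {ω : Ω} (hT : 0 < T)
    (hW : Continuous fun t => W t ω) (h : ω ∈ oscBoundSet W T a n) :
    OscLE (fun t => W t ω) (Icc 0 T) ((n : ℝ) + 1)⁻¹ a ∧ ∀ t ∈ Icc 0 T, |W t ω| ≤ n := by
  have hQ := Icc_subset_closure_Icc_inter_range_ratCast hT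
  exact ⟨(h.1.closure hW).mono hQ le_rfl,
    fun t ht => closure_minimal h.2
      (isClosed_le (by fun_prop : Continuous fun t => |W t ω|) continuous_const) (hQ ht)⟩

end Events

theorem stmt_15 {Ω : Type*} [MeasurableSpace Ω] (P : Measure Ω) [IsProbabilityMeasure P]
    (W : ℝ → Ω → ℝ) (hW : IsBrownianMotion P W)
    (T η : ℝ) (hT : 0 < T) (hη : 0 < η)
    (Z : ℝ → ℝ → Ω → ℝ) (hZ : ∀ lam : ℝ, 0 < lam → SolvesOU P lam η W (Z lam) T) :
    ∀ ε : ℝ, 0 < ε →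
      Tendsto (fun lam => P {ω | ε ≤ ⨆ t : Set.Icc (0 : ℝ) T, |Z lam t ω|})
        atTop (nhds 0) := by
  intro ε hε
  obtain ⟨hWmeas, hWae, -, -⟩ := hW
  have ha : 0 < ε / (2 * η) := by positivity
  rw [ENNReal.tendsto_nhds_zero]
  intro ε' hε'
  obtain ⟨n, hn⟩ := ((tendsto_measure_compl_of_monotone (measurableSet_oscBoundSet hWmeas T _)
    (monotone_oscBoundSet W T _) (hWae.mono fun ω hω => exists_mem_oscBoundSet hω.2 T ha)
    ).eventually_lt_const hε').exists
  set δ : ℝ := ((n : ℝ) + 1)⁻¹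
  have hlim : Tendsto (fun lam => η * (ε / (2 * η) + 2 * n * ((1 + lam * T) * exp (-(lam * δ)))))
      atTop (𝓝 (ε / 2)) := by
    convert (((tendsto_one_add_mul_mul_exp_neg_mul_atTop (δ := δ) (by positivity) T).const_mul
      (2 * (n : ℝ))).const_add (ε / (2 * η))).const_mul η using 2
    field_simp
    ring
  filter_upwards [eventually_gt_atTop 0, hlim.eventually_lt_const (half_lt_self hε)]
    with lam hlam hbound
  refine (measure_mono_ae ?_).trans hn.le
  filter_upwards [hZ lam hlam, hWae] with ω hωZ hωW hsup hω
  obtain ⟨hzc, -, heq⟩ := hωZ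
  obtain ⟨hw0, hwc⟩ := hωW
  obtain ⟨hosc, hbdd⟩ := oscLE_Icc_of_mem_oscBoundSet hT hwc hω
  have : Nonempty (Icc (0 : ℝ) T) := ⟨⟨0, le_rfl, hT.le⟩⟩
  have hle := ciSup_le fun t : Icc (0 : ℝ) T =>
    abs_le_of_integral_eq hlam.le hη.le ha.le hwc.continuousOn hw0 hzc heq hosc hbdd t.2
  exact absurd (hsup.trans hle) (not_le.2 hbound)
end

section
/- There exists a sequence {Xⁿ} of continuous semimartingales on [0,1] (namely Ornstein–Uhlenbeck processes Xⁿ = Z^{λₙ,ηₙ} with ηₙ → ∞ and λₙ chosen large) such that sup_{t≤1}|Xⁿ_t| → 0 almost surely, while the quadratic variations satisfy [Xⁿ, Xⁿ]₁ = ηₙ² → ∞. -/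
open MeasureTheory Filter ProbabilityTheory

open Set Real Topology

/-! Pathwise, the solution of `f t = -λ ∫₀ᵗ f + η w t` is
`f t = η e^{-λt} (w t + λ ∫₀ᵗ e^{λs} (w t - w s) ds)`. Bounding each increment `|w t - w s|` by
`e^{λ|t-s|/2} D`, where `D = sup e^{-λ|t-s|/2} |w t - w s|`, gives `|f t| ≤ 2 |η| D`, and `D → 0`
as `λ → ∞` for continuous `w`. As a functional of the Brownian path, `D` is a supremum over a
countable dense set of times, hence measurable; so for each `n` one can pick `λₙ` making
`P(2 ηₙ D ≥ 2⁻ⁿ) < 2⁻ⁿ`, and Borel–Cantelli gives almost sure convergence however fast `ηₙ` grows.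
-/

theorem mul_integral_exp_mul (lam t : ℝ) :
    lam * ∫ s in (0 : ℝ)..t, exp (lam * s) = exp (lam * t) - 1 := by
  rw [← intervalIntegral.integral_const_mul,
    intervalIntegral.integral_eq_sub_of_hasDerivAt (f := fun s => exp (lam * s)) (fun x _ => ?_)
      ((by fun_prop : Continuous fun s => lam * exp (lam * s)).intervalIntegrable _ _)]
  · simp
  · simpa [mul_comm] using ((hasDerivAt_id x).const_mul lam).exp

section IntegralEquation

variable {lam η T t : ℝ} {w f : ℝ → ℝ}

theorem exp_mul_integral_eq_of_integral_equation
    (hf : ContinuousOn f (Icc 0 T)) (hw : ContinuousOn w (Icc 0 T))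
    (heq : ∀ t ∈ Icc (0 : ℝ) T, f t = -lam * (∫ s in (0 : ℝ)..t, f s) + η * w t)
    (ht : t ∈ Icc 0 T) :
    exp (lam * t) * ∫ s in (0 : ℝ)..t, f s = ∫ s in (0 : ℝ)..t, exp (lam * s) * (η * w s) := by
  have hsub : Icc 0 t ⊆ Icc 0 T := Icc_subset_Icc_right ht.2
  have hfi : IntervalIntegrable f volume 0 t := (hf.mono hsub).intervalIntegrable_of_Icc ht.1
  have hF : ContinuousOn (fun s => ∫ u in (0 : ℝ)..s, f u) (Icc 0 t) := by
    simpa [uIcc_of_le ht.1] using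
      intervalIntegral.continuousOn_primitive_interval' hfi left_mem_uIcc
  have hderiv : ∀ x ∈ Ioo 0 t, HasDerivAt (fun s => exp (lam * s) * ∫ u in (0 : ℝ)..s, f u)
      (exp (lam * x) * (η * w x)) x := by
    intro x hx
    have hxT : x ∈ Ioo 0 T := ⟨hx.1, hx.2.trans_le ht.2⟩
    have hfx : ContinuousAt f x := hf.continuousAt (Icc_mem_nhds hxT.1 hxT.2)
    have hprim := intervalIntegral.integral_hasDerivAt_right
      ((hf.mono (Icc_subset_Icc_right (hx.2.le.trans ht.2))).intervalIntegrable_of_Icc hx.1.le)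
      ((hf.mono Ioo_subset_Icc_self).stronglyMeasurableAtFilter isOpen_Ioo x hxT) hfx
    refine (((hasDerivAt_id x).const_mul lam).exp.mul hprim).congr_deriv ?_
    rw [heq x (Ioo_subset_Icc_self hxT)]
    simp only [id]
    ring
  have hint : IntervalIntegrable (fun s => exp (lam * s) * (η * w s)) volume 0 t :=
    ((by fun_prop : Continuous fun s => exp (lam * s)).continuousOn.mul
      (continuousOn_const.mul (hw.mono hsub))).intervalIntegrable_of_Icc ht.1
  rw [intervalIntegral.integral_eq_sub_of_hasDerivAt_of_le ht.1
    ((by fun_prop : Continuous fun s => exp (lam * s)).continuousOn.mul hF) hderiv hint]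
  simp

theorem eq_duhamel_of_integral_equation
    (hf : ContinuousOn f (Icc 0 T)) (hw : ContinuousOn w (Icc 0 T))
    (heq : ∀ t ∈ Icc (0 : ℝ) T, f t = -lam * (∫ s in (0 : ℝ)..t, f s) + η * w t)
    (ht : t ∈ Icc 0 T) :
    f t = η * exp (-(lam * t)) *
      (w t + lam * ∫ s in (0 : ℝ)..t, exp (lam * s) * (w t - w s)) := by
  have hwi : IntervalIntegrable (fun s => exp (lam * s) * w s) volume 0 t :=
    ((by fun_prop : Continuous fun s => exp (lam * s)).continuousOn.mul
      (hw.mono (Icc_subset_Icc_right ht.2))).intervalIntegrable_of_Icc ht.1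
  have hsplit : ∫ s in (0 : ℝ)..t, exp (lam * s) * (w t - w s) =
      w t * (∫ s in (0 : ℝ)..t, exp (lam * s)) - ∫ s in (0 : ℝ)..t, exp (lam * s) * w s := by
    simp_rw [mul_sub]
    rw [intervalIntegral.integral_sub _ hwi, ← intervalIntegral.integral_const_mul]
    · simp_rw [mul_comm (w t)]
    · exact (by fun_prop : Continuous fun s => exp (lam * s) * w t).intervalIntegrable _ _
  have hfactor := exp_mul_integral_eq_of_integral_equation hf hw heq ht
  simp_rw [mul_left_comm _ η, intervalIntegral.integral_const_mul] at hfactor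
  have hinv : exp (-(lam * t)) * exp (lam * t) = 1 := by rw [← exp_add]; simp
  rw [heq t ht, hsplit]
  linear_combination (-lam * exp (-(lam * t))) * hfactor
    - (η * exp (-(lam * t)) * w t) * mul_integral_exp_mul lam t
    + (lam * (∫ s in (0 : ℝ)..t, f s) - η * w t) * hinv

end IntegralEquation

noncomputable def expWeightedOsc (T μ : ℝ) (w : ℝ → ℝ) : ℝ :=
  ⨆ p : Icc (0 : ℝ) T × Icc (0 : ℝ) T, exp (-(μ * |(p.1 : ℝ) - p.2|)) * |w p.1 - w p.2|

section expWeightedOsc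

variable {T μ : ℝ} {w : ℝ → ℝ}

theorem expWeightedOsc_nonneg : 0 ≤ expWeightedOsc T μ w :=
  Real.iSup_nonneg fun _ => by positivity

theorem ContinuousOn.continuous_expWeightedOsc_integrand (hw : ContinuousOn w (Icc 0 T)) :
    Continuous fun p : Icc (0 : ℝ) T × Icc (0 : ℝ) T =>
      exp (-(μ * |(p.1 : ℝ) - p.2|)) * |w p.1 - w p.2| := by
  have hw' : Continuous fun x : Icc (0 : ℝ) T => w x :=
    continuousOn_iff_continuous_domRestrict.1 hw
  have hval : Continuous fun x : Icc (0 : ℝ) T => (x : ℝ) := continuous_subtype_val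
  exact (continuous_const.mul ((hval.comp continuous_fst).sub
    (hval.comp continuous_snd)).abs).neg.rexp.mul
    ((hw'.comp continuous_fst).sub (hw'.comp continuous_snd)).abs

theorem abs_sub_le_exp_mul_expWeightedOsc (hw : ContinuousOn w (Icc 0 T)) {s t : ℝ}
    (hs : s ∈ Icc 0 T) (ht : t ∈ Icc 0 T) :
    |w s - w t| ≤ exp (μ * |s - t|) * expWeightedOsc T μ w := by
  have hle := le_ciSup
    (isCompact_range (hw.continuous_expWeightedOsc_integrand (μ := μ))).bddAbove
    (⟨⟨s, hs⟩, ⟨t, ht⟩⟩ : Icc (0 : ℝ) T × Icc (0 : ℝ) T)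
  rw [← div_le_iff₀' (exp_pos _), div_eq_inv_mul, ← exp_neg]
  exact hle

theorem tendsto_expWeightedOsc_atTop (hw : ContinuousOn w (Icc 0 T)) :
    Tendsto (fun μ => expWeightedOsc T μ w) atTop (𝓝 0) := by
  refine tendsto_order.2 ⟨fun a ha => Eventually.of_forall fun _ =>
    ha.trans_le expWeightedOsc_nonneg, fun ε hε => ?_⟩
  obtain ⟨δ, hδ, hclose⟩ := Metric.uniformContinuousOn_iff.1
    (isCompact_Icc.uniformContinuousOn_of_continuous hw) (ε / 2) (half_pos hε)
  obtain ⟨C, hC⟩ := isCompact_Icc.exists_bound_of_continuousOn hw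
  have hfar : Tendsto (fun μ => 2 * C * exp (-(μ * δ))) atTop (𝓝 0) := by
    simpa using (tendsto_exp_neg_atTop_nhds_zero.comp
      (tendsto_id.atTop_mul_const hδ)).const_mul (2 * C)
  filter_upwards [hfar.eventually (gt_mem_nhds (half_pos hε)), eventually_ge_atTop 0]
    with μ hμ hμ0
  refine (Real.iSup_le (fun ⟨⟨s, hs⟩, ⟨t, ht⟩⟩ => ?_) (half_pos hε).le).trans_lt
    (half_lt_self hε)
  dsimp only
  rcases lt_or_ge |s - t| δ with hst | hst
  · have hexp : exp (-(μ * |s - t|)) ≤ 1 := exp_le_one_iff.2 (by nlinarith [abs_nonneg (s - t)])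
    have hdiff := hclose s hs t ht (by rwa [Real.dist_eq])
    rw [Real.dist_eq] at hdiff
    nlinarith [abs_nonneg (w s - w t), exp_pos (-(μ * |s - t|))]
  · have hexp : exp (-(μ * |s - t|)) ≤ exp (-(μ * δ)) := exp_le_exp.2 (by nlinarith)
    have hdiff : |w s - w t| ≤ 2 * C := by
      have := hC s hs; have := hC t ht
      rw [Real.norm_eq_abs] at *
      linarith [abs_sub (w s) (w t)]
    nlinarith [abs_nonneg (w s - w t), exp_pos (-(μ * |s - t|))]

end expWeightedOsc

theorem abs_integral_exp_mul_sub_le {lam T t : ℝ} {w : ℝ → ℝ}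
    (hw : ContinuousOn w (Icc 0 T)) (ht : t ∈ Icc 0 T) :
    |∫ s in (0 : ℝ)..t, exp (lam * s) * (w t - w s)| ≤
      expWeightedOsc T (lam / 2) w * exp (lam / 2 * t) * ∫ s in (0 : ℝ)..t, exp (lam / 2 * s) := by
  set D := expWeightedOsc T (lam / 2) w
  rw [← intervalIntegral.integral_const_mul]
  refine (intervalIntegral.abs_integral_le_integral_abs ht.1).trans
    (intervalIntegral.integral_mono_on ht.1 ?_ ?_ fun s hs => ?_)
  · exact ((by fun_prop : Continuous fun s => exp (lam * s)).continuousOn.mul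
      (continuousOn_const.sub (hw.mono (Icc_subset_Icc_right ht.2)))).abs
      |>.intervalIntegrable_of_Icc ht.1
  · exact (by fun_prop : Continuous fun s => D * exp (lam / 2 * t) * exp (lam / 2 * s))
      |>.intervalIntegrable _ _
  have hinc := abs_sub_le_exp_mul_expWeightedOsc hw ht ⟨hs.1, hs.2.trans ht.2⟩ (μ := lam / 2)
  rw [abs_of_nonneg (sub_nonneg.2 hs.2)] at hinc
  have hsplit :
      exp (lam * s) * exp (lam / 2 * (t - s)) = exp (lam / 2 * t) * exp (lam / 2 * s) := by
    simp only [← exp_add]; ring_nf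
  calc |exp (lam * s) * (w t - w s)| = exp (lam * s) * |w t - w s| := by
        rw [abs_mul, abs_of_pos (exp_pos _)]
    _ ≤ exp (lam * s) * (exp (lam / 2 * (t - s)) * D) := by gcongr
    _ = D * exp (lam / 2 * t) * exp (lam / 2 * s) := by rw [← mul_assoc, hsplit]; ring

theorem abs_le_expWeightedOsc_of_integral_equation {lam η T t : ℝ} {w f : ℝ → ℝ}
    (hf : ContinuousOn f (Icc 0 T)) (hw : ContinuousOn w (Icc 0 T)) (hw0 : w 0 = 0)
    (heq : ∀ t ∈ Icc (0 : ℝ) T, f t = -lam * (∫ s in (0 : ℝ)..t, f s) + η * w t)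
    (hlam : 0 ≤ lam) (ht : t ∈ Icc 0 T) :
    |f t| ≤ 2 * |η| * expWeightedOsc T (lam / 2) w := by
  set D := expWeightedOsc T (lam / 2) w
  set a := exp (lam / 2 * t)
  have h0 : (0 : ℝ) ∈ Icc 0 T := ⟨le_rfl, ht.1.trans ht.2⟩
  have hinv : exp (-(lam * t)) * a * a = 1 := by
    simp only [a, ← exp_add]; ring_nf; simp
  have hwt : |w t| ≤ a * D := by
    simpa [hw0, abs_of_nonneg ht.1] using
      abs_sub_le_exp_mul_expWeightedOsc hw ht h0 (μ := lam / 2)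
  have hK := abs_integral_exp_mul_sub_le hw ht (lam := lam)
  have hI := mul_integral_exp_mul (lam / 2) t
  rw [eq_duhamel_of_integral_equation hf hw heq ht, abs_mul, abs_mul, abs_of_pos (exp_pos _)]
  calc |η| * exp (-(lam * t)) * |w t + lam * ∫ s in (0 : ℝ)..t, exp (lam * s) * (w t - w s)|
      ≤ |η| * exp (-(lam * t)) *
          (a * D + lam * (D * a * ∫ s in (0 : ℝ)..t, exp (lam / 2 * s))) := by
        gcongr
        refine (abs_add_le _ _).trans (add_le_add hwt ?_)
        rw [abs_mul, abs_of_nonneg hlam]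
        gcongr
    _ = |η| * (2 * D - exp (-(lam * t)) * a * D) := by
        linear_combination (|η| * exp (-(lam * t)) * D * a * 2) * hI + (2 * |η| * D) * hinv
    _ ≤ 2 * |η| * D := by
        have : 0 ≤ |η| * (exp (-(lam * t)) * a * D) :=
          mul_nonneg (abs_nonneg η) (mul_nonneg (by positivity) expWeightedOsc_nonneg)
        linarith

theorem aemeasurable_expWeightedOsc {Ω : Type*} [MeasurableSpace Ω] {P : Measure Ω}
    {W : ℝ → Ω → ℝ} {T : ℝ} (hm : ∀ t, Measurable (W t))
    (hc : ∀ᵐ ω ∂P, ContinuousOn (fun t => W t ω) (Icc 0 T)) (μ : ℝ) :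
    AEMeasurable (fun ω => expWeightedOsc T μ fun t => W t ω) P := by
  obtain ⟨S, hScount, hSdense⟩ :=
    TopologicalSpace.exists_countable_dense (Icc (0 : ℝ) T × Icc (0 : ℝ) T)
  have := hScount.to_subtype
  refine ⟨fun ω => ⨆ p : S, exp (-(μ * |(p.1.1 : ℝ) - p.1.2|)) * |W p.1.1 ω - W p.1.2 ω|,
    Measurable.iSup fun p => (((hm _).sub (hm _)).abs).const_mul _, ?_⟩
  filter_upwards [hc] with ω hω
  exact (hSdense.ciSup' hω.continuous_expWeightedOsc_integrand).symm

theorem exists_seq_tendsto_ae_diagonal {Ω : Type*} [MeasurableSpace Ω] {P : Measure Ω}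
    [IsFiniteMeasure P] {g : ℕ → ℕ → Ω → ℝ} (hmeas : ∀ n k, AEStronglyMeasurable (g n k) P)
    (hlim : ∀ n, ∀ᵐ ω ∂P, Tendsto (fun k => g n k ω) atTop (𝓝 0)) :
    ∃ k : ℕ → ℕ, ∀ᵐ ω ∂P, Tendsto (fun n => g n (k n) ω) atTop (𝓝 0) := by
  have hsmall : ∀ n, ∃ k, P {ω | (2⁻¹ : ℝ) ^ n ≤ |g n k ω|} < 2⁻¹ ^ n := by
    intro n
    have h := tendstoInMeasure_iff_dist.1
      (tendstoInMeasure_of_tendsto_ae (hmeas n) (hlim n)) _ (by positivity : (0 : ℝ) < 2⁻¹ ^ n)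
    simpa [Real.dist_eq] using (h.eventually (gt_mem_nhds (ENNReal.pow_pos (by norm_num) n))).exists
  choose k hk using hsmall
  have hsum : ∑' n, P {ω | (2⁻¹ : ℝ) ^ n ≤ |g n (k n) ω|} ≠ ⊤ := by
    refine ne_top_of_le_ne_top ?_ (ENNReal.tsum_le_tsum fun n => (hk n).le)
    simp [ENNReal.tsum_geometric]
  refine ⟨k, ?_⟩
  filter_upwards [ae_eventually_notMem hsum] with ω hω
  exact squeeze_zero_norm' (hω.mono fun n hn => (not_le.1 hn).le)
    (tendsto_pow_atTop_nhds_zero_of_lt_one (r := (2⁻¹ : ℝ)) (by norm_num) (by norm_num))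

theorem stmt_16 {Ω : Type*} [MeasurableSpace Ω] (P : Measure Ω) [IsProbabilityMeasure P]
    (W : ℝ → Ω → ℝ) (hW : IsBrownianMotion P W)
    (hexists : ∀ lam η : ℝ, 0 < lam → 0 < η → ∃ Z, SolvesOU P lam η W Z 1)
    (η : ℕ → ℝ) (hηpos : ∀ n, 0 < η n) (hη : Tendsto η atTop atTop) :
    ∃ (lam : ℕ → ℝ) (X : ℕ → ℝ → Ω → ℝ),
      (∀ n, 0 < lam n ∧ SolvesOU P (lam n) (η n) W (X n) 1) ∧
      (∀ᵐ ω ∂P,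
        Tendsto (fun n => ⨆ t : Set.Icc (0 : ℝ) 1, |X n t ω|) atTop (nhds 0)) ∧
      Tendsto (fun n => (η n) ^ 2) atTop atTop := by
  obtain ⟨hWm, hWae, -, -⟩ := hW
  have hWcont : ∀ᵐ ω ∂P, ContinuousOn (fun t => W t ω) (Icc 0 1) :=
    hWae.mono fun ω hω => hω.2.continuousOn
  set D : ℕ → Ω → ℝ := fun k ω => expWeightedOsc 1 (k + 1) fun t => W t ω
  obtain ⟨K, hK⟩ := exists_seq_tendsto_ae_diagonal (g := fun n k ω => 2 * η n * D k ω)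
    (fun n k => ((aemeasurable_expWeightedOsc hWm hWcont _).const_mul _).aestronglyMeasurable)
    (fun n => hWcont.mono fun ω hω => by
      simpa using ((tendsto_expWeightedOsc_atTop hω).comp
        (tendsto_atTop_add_const_right _ 1 tendsto_natCast_atTop_atTop)).const_mul (2 * η n))
  set lam : ℕ → ℝ := fun n => 2 * (K n + 1)
  choose X hX using fun n => hexists (lam n) (η n) (by positivity) (hηpos n)
  refine ⟨lam, X, fun n => ⟨by positivity, hX n⟩, ?_, (tendsto_pow_atTop two_ne_zero).comp hη⟩
  filter_upwards [hK, hWae, ae_all_iff.2 hX] with ω hKω hWω hXω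
  refine squeeze_zero (fun n => Real.iSup_nonneg fun _ => abs_nonneg _) (fun n => ?_) hKω
  obtain ⟨hXc, -, hXeq⟩ := hXω n
  refine Real.iSup_le (fun t => ?_) (mul_nonneg (by linarith [hηpos n]) expWeightedOsc_nonneg)
  have hbound := abs_le_expWeightedOsc_of_integral_equation hXc hWω.2.continuousOn hWω.1 hXeq
    (by positivity) t.2
  simpa [lam, abs_of_pos (hηpos n)] using hbound
end
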